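/- For any lattice path P from (0,0) to (n,n) with unit steps, the n+1 cyclic shifts of the vector c(P) = (c_0,...,c_n), where c_i is the number of horizontal steps of P at height i, determine n+1 lattice paths whose exceedances are exactly the numbers 0,1,...,n in some order. -/

import Mathlib

open scoped Classical

open Fin.NatCast in
/-- A lattice path from `(0,0)` to `(n,n)` is encoded by the vector
`c : Fin (n+1) → ℕ` (with `∑ c = n`) of its numbers of horizontal steps at
each height. `psum c y` is `c_0 + ⋯ + c_{y-1}`; the point `(i, y)` lies on
the path iff `psum c y ≤ i ≤ psum c (y+1)`. -/
noncomputable def psum {n : ℕ} (c : Fin (n + 1) → ℕ) (y : ℕ) : ℕ :=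
  ∑ z ∈ Finset.range y, c (z : Fin (n + 1))

/-- The exceedance of the lattice path with horizontal-step vector `c`:
the number of `i ∈ {0,…,n}` such that the path contains a point `(i, y)`
with `y > i`. -/
noncomputable def excPath {n : ℕ} (c : Fin (n + 1) → ℕ) : ℕ :=
  ((Finset.range (n + 1)).filter (fun i =>
    ∃ y ≤ n, i < y ∧ psum c y ≤ i ∧ i ≤ psum c (y + 1))).card

/-! Let `d y = psum c y - y` be the horizontal offset from the diagonal at which the path reaches
height `y`. Since `∑ c = n`, extending `c` periodically gives `d (y + n + 1) = d y - 1`. The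
exceedance of the `j`-th cyclic shift is the number of `k ∈ (j, j + n + 1)` with `d k < d j`;
folding `k` back into `{0, …, n}` with the period, this is the number of `m` with
`(d m, m) < (d j, j)` lexicographically, i.e. the rank of `j` for a strict total order on
`{0, …, n}`. The ranks of the `n + 1` elements are `0, …, n`. -/

open Finset Fin.NatCast

theorem Nat.exists_le_le_succ {α : Type*} [LinearOrder α] {f : ℕ → α} {a b : ℕ} {x : α}
    (hab : a < b) (ha : f a ≤ x) (hb : x ≤ f b) :
    ∃ y, a ≤ y ∧ y < b ∧ f y ≤ x ∧ x ≤ f (y + 1) := by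
  induction b, (hab : a + 1 ≤ b) using Nat.le_induction with
  | base => exact ⟨a, le_rfl, a.lt_succ_self, ha, hb⟩
  | succ b hab ih =>
    by_cases h : f b ≤ x
    · exact ⟨b, by omega, b.lt_succ_self, h, hb⟩
    · obtain ⟨y, hay, hyb, hy⟩ := ih (le_of_not_ge h)
      exact ⟨y, hay, by omega, hy⟩

theorem Finset.image_card_filter_lt_eq_range {ι α : Type*} [Fintype ι] [LinearOrder α]
    {v : ι → α} (hv : Function.Injective v) :
    univ.image (fun j => #{m | v m < v j}) = range (Fintype.card ι) := by
  have rank_strictMono : ∀ i j, v i < v j → #{m | v m < v i} < #{m | v m < v j} := by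
    intro i j hij
    refine card_lt_card ⟨fun m hm => ?_, fun hsub => ?_⟩
    · simp only [mem_filter, mem_univ, true_and] at hm ⊢
      exact hm.trans hij
    · simpa using hsub (by simpa using hij : i ∈ ({m | v m < v j} : Finset ι))
  have rank_injective : Function.Injective (fun j => #{m | v m < v j}) := by
    intro i j hij
    by_contra hne
    rcases (hv.ne hne).lt_or_gt with h | h
    · exact (rank_strictMono i j h).ne hij
    · exact (rank_strictMono j i h).ne' hij
  refine eq_of_subset_of_card_le (fun r hr => ?_) ?_
  · obtain ⟨j, -, rfl⟩ := mem_image.1 hr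
    refine mem_range.2 (card_lt_card ⟨filter_subset _ _, fun hsub => ?_⟩)
    simpa using hsub (mem_univ j)
  · rw [card_range, card_image_of_injective _ rank_injective, card_univ]

theorem card_filter_Ioo_lt_eq_card_filter_toLex_lt {N : ℕ} {f : ℕ → ℤ}
    (hf : ∀ m, f (m + N) = f m - 1) (j : Fin N) :
    #{k ∈ Ioo (j : ℕ) (j + N) | f k < f j} =
      #{m : Fin N | toLex (f m, m) < toLex (f j, j)} := by
  refine card_bij' (fun k hk => ⟨if k < N then k else k - N, ?_⟩)
    (fun m _ => if (j : ℕ) < m then (m : ℕ) else m + N) ?_ ?_ ?_ ?_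
  · simp only [mem_filter, mem_Ioo] at hk
    split_ifs <;> omega
  · intro k hk
    simp only [mem_filter, mem_Ioo] at hk
    obtain ⟨⟨hjk, hkN⟩, hfk⟩ := hk
    simp only [mem_filter, mem_univ, true_and, Prod.Lex.toLex_lt_toLex, Fin.lt_def]
    split_ifs with h
    · exact Or.inl hfk
    · obtain ⟨m, rfl⟩ : ∃ m, k = m + N := ⟨k - N, by omega⟩
      rw [hf] at hfk
      rw [Nat.add_sub_cancel]
      omega
  · intro m hm
    have hmj : (m : ℕ) ≠ j := Fin.val_injective.ne (by rintro rfl; simp at hm)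
    simp only [mem_filter, mem_univ, true_and, Prod.Lex.toLex_lt_toLex, Fin.lt_def] at hm
    simp only [mem_filter, mem_Ioo]
    split_ifs with h
    · omega
    · rw [hf]
      omega
  · intro k hk
    simp only [mem_filter, mem_Ioo] at hk
    by_cases hkN : k < N
    · simp only [hkN, if_true]
      split_ifs <;> omega
    · simp only [hkN, if_false]
      split_ifs <;> omega
  · intro m _
    ext
    simp only
    split_ifs <;> omega

section LatticePath

variable {n : ℕ} (c : Fin (n + 1) → ℕ)

theorem psum_mono : Monotone (psum c) :=
  fun _ _ hab => sum_le_sum_of_subset (range_subset_range.2 hab)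

theorem psum_eq_sum_univ : psum c (n + 1) = ∑ z, c z := by
  rw [psum, ← Fin.sum_univ_eq_sum_range (fun z => c z)]
  simp only [Fin.cast_val_eq_self]

theorem psum_succ (y : ℕ) : psum c (y + 1) = psum c y + c y :=
  sum_range_succ _ _

theorem psum_add (m y : ℕ) :
    psum c (m + y) = psum c m + psum (fun z => c (z + (m : Fin (n + 1)))) y := by
  induction y with
  | zero => simp [psum]
  | succ y ih =>
    rw [← add_assoc, psum_succ, ih, psum_succ, add_assoc]
    push_cast
    rw [add_comm (m : Fin (n + 1))]

theorem excPath_eq_card_filter (hc : ∑ z, c z = n) :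
    excPath c = #{i ∈ range n | psum c (i + 1) ≤ i} := by
  unfold excPath
  congr 1
  ext i
  simp only [mem_filter, mem_range]
  constructor
  · rintro ⟨-, y, hyn, hiy, hy, -⟩
    exact ⟨by omega, (psum_mono c hiy).trans hy⟩
  · rintro ⟨hin, hi⟩
    have hn : i ≤ psum c (n + 1) := by rw [psum_eq_sum_univ, hc]; omega
    obtain ⟨y, hiy, hyn, hy⟩ := Nat.exists_le_le_succ (by omega : i + 1 < n + 1) hi hn
    exact ⟨by omega, y, by omega, hiy, hy⟩

noncomputable def diagOffset (y : ℕ) : ℤ := psum c y - y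

theorem diagOffset_add_period (hc : ∑ z, c z = n) (m : ℕ) :
    diagOffset c (m + (n + 1)) = diagOffset c m - 1 := by
  have hshift : psum (fun z => c (z + (m : Fin (n + 1)))) (n + 1) = n := by
    rw [psum_eq_sum_univ]
    exact (Fintype.sum_equiv (Equiv.addRight (m : Fin (n + 1))) _ c fun _ => rfl).trans hc
  simp only [diagOffset, psum_add, hshift]
  push_cast
  ring

theorem excPath_shift (hc : ∑ z, c z = n) (j : Fin (n + 1)) :
    excPath (fun z => c (z + j)) =
      #{k ∈ Ioo (j : ℕ) (j + (n + 1)) | diagOffset c k < diagOffset c j} := by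
  have hsum : ∑ z, c (z + j) = n :=
    (Fintype.sum_equiv (Equiv.addRight j) _ c fun _ => rfl).trans hc
  have hpsum (y : ℕ) : psum c (j + y) = psum c j + psum (fun z => c (z + j)) y := by
    rw [psum_add, Fin.cast_val_eq_self]
  rw [excPath_eq_card_filter _ hsum]
  refine card_nbij' (fun i => j + (i + 1)) (fun k => k - (j + 1)) ?_ ?_ ?_ ?_
  · intro i hi
    simp only [mem_coe, mem_filter, mem_range, mem_Ioo] at hi ⊢
    have := hpsum (i + 1)
    simp only [diagOffset]
    push_cast
    omega
  · intro k hk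
    simp only [mem_coe, mem_filter, mem_range, mem_Ioo] at hk ⊢
    obtain ⟨i, rfl⟩ : ∃ i, k = j + (i + 1) := ⟨k - (j + 1), by omega⟩
    have := hpsum (i + 1)
    rw [show (j : ℕ) + (i + 1) - (j + 1) = i by omega]
    simp only [diagOffset] at hk
    push_cast at hk
    omega
  · intro i _
    dsimp only
    omega
  · intro k hk
    simp only [mem_coe, mem_filter, mem_Ioo] at hk
    dsimp only
    omega

end LatticePath

/-- Chung–Feller, cyclic form: the `n+1` cyclic shifts of the
horizontal-step vector `c(P)` of a lattice path from `(0,0)` to `(n,n)`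
determine `n+1` lattice paths whose exceedances are exactly `0, 1, …, n`
in some order. -/
theorem exc_of_cyclicShifts (n : ℕ) (c : Fin (n + 1) → ℕ) (hc : ∑ z, c z = n) :
    Finset.image (fun j : Fin (n + 1) => excPath (fun z => c (z + j))) Finset.univ
      = Finset.range (n + 1) := by
  have hkey : Function.Injective (fun j : Fin (n + 1) => toLex (diagOffset c j, j)) :=
    fun i j hij => (Prod.ext_iff.1 (toLex.injective hij)).2
  simp_rw [excPath_shift c hc,
    card_filter_Ioo_lt_eq_card_filter_toLex_lt (diagOffset_add_period c hc)]
  rw [image_card_filter_lt_eq_range hkey, Fintype.card_fin]
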